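/- arXiv:0801.2477 — 6 statements merged into one kernel-verified Lean document; each statement's English description precedes it below -/
import Mathlib

section
/- Let 0 < ε < 1/4, let X be a compact Hausdorff space, and let φ be a positive continuous linear functional on C(X) of norm 1 that is ε-disjointness preserving, represented by the regular Borel measure λ. Then for every Borel subset C of X, λ(C) does not lie in the open interval ((1 − √(1−4ε))/2, (1 + √(1−4ε))/2). -/
open MeasureTheory Real

/-- Integral of a continuous function against a signed measure (via Jordan decomposition). -/
noncomputable def sInt {X : Type*} [MeasurableSpace X] (s : SignedMeasure X) (f : X → ℝ) : ℝ :=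
  ∫ x, f x ∂s.toJordanDecomposition.posPart - ∫ x, f x ∂s.toJordanDecomposition.negPart

/-- A continuous linear functional on `C(X)` is `ε`-disjointness preserving. -/
def IsEDP {X : Type*} [TopologicalSpace X] [CompactSpace X] (ε : ℝ)
    (φ : C(X, ℝ) →L[ℝ] ℝ) : Prop :=
  ∀ f g : C(X, ℝ), ‖f‖ = 1 → ‖g‖ = 1 → f * g = 0 → |φ f| * |φ g| ≤ ε

/-! If `λ(C)` lay in the interval, then `λ(C) (1 - λ(C)) > ε`, and `1 - λ(C) = λ(Cᶜ)` because
`λ(X) = ‖φ‖ = 1`. Inner regularity gives disjoint compact sets `K ⊆ C`, `L ⊆ Cᶜ` of almost full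
measure; Urysohn functions `f`, `g` equal to `1` on `K`, `L` with disjoint supports have norm `1`
and satisfy `φ f ≥ λ(K)`, `φ g ≥ λ(L)`, so `λ(K) λ(L) ≤ |φ f| |φ g| ≤ ε`, a contradiction. -/

open Set Filter

theorem exists_continuous_eqOn_one_mul_eq_zero_of_isClosed {X : Type*} [TopologicalSpace X]
    [NormalSpace X] {s t : Set X} (hs : IsClosed s) (ht : IsClosed t) (hst : Disjoint s t) :
    ∃ f g : C(X, ℝ), EqOn f 1 s ∧ EqOn g 1 t ∧ (∀ x, f x ∈ Icc (0 : ℝ) 1) ∧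
      (∀ x, g x ∈ Icc (0 : ℝ) 1) ∧ f * g = 0 := by
  obtain ⟨U, V, hU, hV, hsU, htV, hUV⟩ := normal_separation hs ht hst
  obtain ⟨f, hfU, hfs, hf01⟩ := exists_continuous_zero_one_of_isClosed hU.isClosed_compl hs
    (disjoint_compl_left_iff_subset.mpr hsU)
  obtain ⟨g, hgV, hgt, hg01⟩ := exists_continuous_zero_one_of_isClosed hV.isClosed_compl ht
    (disjoint_compl_left_iff_subset.mpr htV)
  refine ⟨f, g, hfs, hgt, hf01, hg01, ContinuousMap.ext fun x => ?_⟩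
  by_cases hxU : x ∈ U
  · simp [hgV (hUV.notMem_of_mem_left hxU)]
  · simp [hfU hxU]

theorem ContinuousMap.norm_eq_one_of_mem_Icc {X : Type*} [TopologicalSpace X] [CompactSpace X]
    {f : C(X, ℝ)} (hf : ∀ x, f x ∈ Icc (0 : ℝ) 1) {x₀ : X} (hx₀ : f x₀ = 1) : ‖f‖ = 1 := by
  refine le_antisymm ((f.norm_le zero_le_one).mpr fun x => ?_) ?_
  · rw [Real.norm_eq_abs, abs_le]
    exact ⟨by linarith [(hf x).1], (hf x).2⟩
  · simpa [hx₀] using f.norm_coe_le_norm x₀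

theorem measureReal_le_integral_of_one_le {X : Type*} [MeasurableSpace X] {μ : Measure X}
    [IsFiniteMeasure μ] {f : X → ℝ} {s : Set X} (hs : MeasurableSet s) (hf : Integrable f μ)
    (hf0 : 0 ≤ f) (hfs : ∀ x ∈ s, 1 ≤ f x) : μ.real s ≤ ∫ x, f x ∂μ := by
  rw [← integral_indicator_one hs]
  exact integral_mono ((integrable_const 1).indicator hs) hf
    (indicator_le' hfs fun x _ => hf0 x)

section Representation

variable {X : Type*} [TopologicalSpace X] [CompactSpace X] [MeasurableSpace X]
  {μ : Measure X} [IsFiniteMeasure μ] {φ : C(X, ℝ) →L[ℝ] ℝ}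

theorem norm_eq_measureReal_univ (hrep : ∀ f : C(X, ℝ), φ f = ∫ x, f x ∂μ) :
    ‖φ‖ = μ.real univ := by
  refine le_antisymm (φ.opNorm_le_bound measureReal_nonneg fun f => ?_) ?_
  · rw [hrep, mul_comm]
    exact norm_integral_le_of_norm_le_const (Eventually.of_forall f.norm_coe_le_norm)
  · calc μ.real univ = φ 1 := by simp [hrep]
      _ ≤ ‖φ‖ * ‖(1 : C(X, ℝ))‖ := (le_abs_self _).trans (φ.le_opNorm 1)
      _ ≤ ‖φ‖ := mul_le_of_le_one_right (norm_nonneg φ)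
          ((ContinuousMap.norm_le _ zero_le_one).mpr fun x => by simp)

variable [T2Space X] [BorelSpace X] {ε : ℝ}

theorem IsEDP.measureReal_mul_le_of_isCompact (hdp : IsEDP ε φ) (hε : 0 ≤ ε)
    (hrep : ∀ f : C(X, ℝ), φ f = ∫ x, f x ∂μ) {K L : Set X} (hK : IsCompact K)
    (hL : IsCompact L) (hKL : Disjoint K L) : μ.real K * μ.real L ≤ ε := by
  rcases K.eq_empty_or_nonempty with rfl | ⟨x, hx⟩
  · simpa using hε
  rcases L.eq_empty_or_nonempty with rfl | ⟨y, hy⟩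
  · simpa using hε
  obtain ⟨f, g, hfK, hgL, hf01, hg01, hfg⟩ :=
    exists_continuous_eqOn_one_mul_eq_zero_of_isClosed hK.isClosed hL.isClosed hKL
  have lower_bound {h : C(X, ℝ)} {T : Set X} (hT : IsCompact T) (h01 : ∀ x, h x ∈ Icc (0 : ℝ) 1)
      (hhT : EqOn h 1 T) : μ.real T ≤ |φ h| := by
    rw [hrep]
    exact (measureReal_le_integral_of_one_le hT.measurableSet
      (h.continuous.integrable_of_hasCompactSupport (.of_compactSpace h))
      (fun x => (h01 x).1) fun x hx => (hhT hx).ge).trans (le_abs_self _)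
  calc μ.real K * μ.real L ≤ |φ f| * |φ g| :=
        mul_le_mul (lower_bound hK hf01 hfK) (lower_bound hL hg01 hgL) measureReal_nonneg
          (abs_nonneg _)
    _ ≤ ε := hdp f g (ContinuousMap.norm_eq_one_of_mem_Icc hf01 (hfK hx))
        (ContinuousMap.norm_eq_one_of_mem_Icc hg01 (hgL hy)) hfg

theorem IsEDP.measureReal_mul_measureReal_compl_le [μ.Regular] (hdp : IsEDP ε φ) (hε : 0 ≤ ε)
    (hrep : ∀ f : C(X, ℝ), φ f = ∫ x, f x ∂μ) {C : Set X} (hC : MeasurableSet C) :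
    μ.real C * μ.real Cᶜ ≤ ε := by
  suffices μ C * μ Cᶜ ≤ ENNReal.ofReal ε by
    rw [measureReal_def, measureReal_def, ← ENNReal.toReal_mul]
    exact ENNReal.toReal_le_of_le_ofReal hε this
  rw [hC.measure_eq_iSup_isCompact_of_ne_top (measure_ne_top μ C),
    hC.compl.measure_eq_iSup_isCompact_of_ne_top (measure_ne_top μ Cᶜ)]
  simp only [ENNReal.iSup_mul, ENNReal.mul_iSup, iSup_le_iff]
  intro L hLC hL K hKC hK
  rw [← ofReal_measureReal, ← ofReal_measureReal,
    ← ENNReal.ofReal_mul measureReal_nonneg]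
  exact ENNReal.ofReal_le_ofReal (hdp.measureReal_mul_le_of_isCompact hε hrep hK hL
    (disjoint_compl_right.mono hKC hLC))

end Representation

theorem lt_mul_one_sub_of_mem_Ioo {ε a : ℝ} (hε : ε ≤ 1 / 4)
    (ha : a ∈ Ioo ((1 - √(1 - 4 * ε)) / 2) ((1 + √(1 - 4 * ε)) / 2)) : ε < a * (1 - a) := by
  have hs : √(1 - 4 * ε) ^ 2 = 1 - 4 * ε := sq_sqrt (by linarith)
  nlinarith [ha.1, ha.2]

theorem stmt0_general {X : Type*} [TopologicalSpace X] [CompactSpace X] [T2Space X]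
    [MeasurableSpace X] [BorelSpace X]
    (ε : ℝ) (hε : 0 < ε) (hε' : ε < 1/4)
    (φ : C(X, ℝ) →L[ℝ] ℝ)
    (hnorm : ‖φ‖ = 1) (hdp : IsEDP ε φ)
    (lam : Measure X) [lam.Regular]
    (hrep : ∀ f : C(X, ℝ), φ f = ∫ x, f x ∂lam)
    (C : Set X) (hC : MeasurableSet C) :
    (lam C).toReal ∉
      Set.Ioo ((1 - sqrt (1 - 4*ε))/2) ((1 + sqrt (1 - 4*ε))/2) := by
  intro hmem
  have hmass : lam.real univ = 1 := by rw [← norm_eq_measureReal_univ hrep, hnorm]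
  have hcompl : lam.real Cᶜ = 1 - lam.real C := by rw [measureReal_compl hC, hmass]
  have hprod := hdp.measureReal_mul_measureReal_compl_le hε.le hrep hC
  exact (lt_mul_one_sub_of_mem_Ioo hε'.le hmem).not_ge (hcompl ▸ hprod)

theorem stmt0 {X : Type*} [TopologicalSpace X] [CompactSpace X] [T2Space X]
    [MeasurableSpace X] [BorelSpace X]
    (ε : ℝ) (hε : 0 < ε) (hε' : ε < 1/4)
    (φ : C(X, ℝ) →L[ℝ] ℝ) (hpos : ∀ f : C(X, ℝ), 0 ≤ f → 0 ≤ φ f)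
    (hnorm : ‖φ‖ = 1) (hdp : IsEDP ε φ)
    (lam : Measure X) [IsFiniteMeasure lam] [lam.Regular]
    (hrep : ∀ f : C(X, ℝ), φ f = ∫ x, f x ∂lam)
    (C : Set X) (hC : MeasurableSet C) :
    (lam C).toReal ∉
      Set.Ioo ((1 - sqrt (1 - 4*ε))/2) ((1 + sqrt (1 - 4*ε))/2) :=
  stmt0_general ε hε hε' φ hnorm hdp lam hrep C hC
end

section
/- Let 0 < ε < 2/9 and suppose φ ∈ C(X)' is ε-disjointness preserving with √(9ε/2) < ‖φ‖ ≤ 1. If x ∈ X is the (unique) point with ‖φ − λ({x})δ_x‖ ≤ (‖φ‖ − √(‖φ‖² − 4ε))/2, then √(‖φ‖² − 4ε) ≤ |φ(f)| for every f ∈ C(X) with |f(x)| = 1 = ‖f‖∞. -/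
open MeasureTheory Real

theorem ContinuousLinearMap.norm_sub_two_mul_norm_sub_smul_le_norm_apply
    {𝕜 E : Type*} [NontriviallyNormedField 𝕜] [SeminormedAddCommGroup E] [NormedSpace 𝕜 E]
    (φ δ : E →L[𝕜] 𝕜) (c : 𝕜) (hδ : ‖δ‖ ≤ 1) {f : E} (hf : ‖f‖ ≤ 1) (hδf : ‖δ f‖ = 1) :
    ‖φ‖ - 2 * ‖φ - c • δ‖ ≤ ‖φ f‖ := by
  have hφ : ‖φ‖ ≤ ‖φ - c • δ‖ + ‖c‖ :=
    calc ‖φ‖ = ‖(φ - c • δ) + c • δ‖ := by rw [sub_add_cancel]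
      _ ≤ ‖φ - c • δ‖ + ‖c‖ * ‖δ‖ := (norm_add_le _ _).trans (by gcongr; exact opNorm_smul_le _ _)
      _ ≤ ‖φ - c • δ‖ + ‖c‖ := by gcongr; exact mul_le_of_le_one_right (norm_nonneg c) hδ
  have hφf : ‖c‖ - ‖φ - c • δ‖ ≤ ‖φ f‖ :=
    calc ‖c‖ - ‖φ - c • δ‖ ≤ ‖c • δ f‖ - ‖(φ - c • δ) f‖ := by
          rw [norm_smul, hδf, mul_one]
          gcongr
          exact ((φ - c • δ).le_opNorm f).trans (mul_le_of_le_one_right (norm_nonneg _) hf)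
      _ ≤ ‖c • δ f + (φ - c • δ) f‖ := norm_sub_le_norm_add _ _
      _ = ‖φ f‖ := by simp
  linarith

theorem ContinuousMap.norm_evalCLM_le {𝕜 X β : Type*} [NontriviallyNormedField 𝕜]
    [TopologicalSpace X] [CompactSpace X] [SeminormedAddCommGroup β] [NormedSpace 𝕜 β] (x : X) :
    ‖(ContinuousMap.evalCLM 𝕜 x : C(X, β) →L[𝕜] β)‖ ≤ 1 :=
  ContinuousLinearMap.opNorm_le_bound _ zero_le_one fun g => by
    simpa using g.norm_coe_le_norm x

theorem stmt6_general {X : Type*} [TopologicalSpace X] [CompactSpace X]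
    [MeasurableSpace X]
    (ε : ℝ)
    (φ : C(X, ℝ) →L[ℝ] ℝ)
    (s : SignedMeasure X)
    (x : X)
    (hx : ‖φ - s {x} • ContinuousMap.evalCLM ℝ x‖ ≤
      (‖φ‖ - sqrt (‖φ‖^2 - 4*ε))/2) :
    ∀ f : C(X, ℝ), |f x| = 1 → ‖f‖ = 1 → sqrt (‖φ‖^2 - 4*ε) ≤ |φ f| := by
  intro f hfx hf
  have hbound := φ.norm_sub_two_mul_norm_sub_smul_le_norm_apply _ (s {x})
    (ContinuousMap.norm_evalCLM_le x) hf.le (by simpa [ContinuousMap.evalCLM] using hfx)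
  rw [Real.norm_eq_abs] at hbound
  linarith

theorem stmt6 {X : Type*} [TopologicalSpace X] [CompactSpace X] [T2Space X]
    [MeasurableSpace X] [BorelSpace X]
    (ε : ℝ) (hε : 0 < ε) (hε' : ε < 2/9)
    (φ : C(X, ℝ) →L[ℝ] ℝ) (hdp : IsEDP ε φ)
    (hlb : sqrt (9*ε/2) < ‖φ‖) (hub : ‖φ‖ ≤ 1)
    (s : SignedMeasure X) (hrep : ∀ f : C(X, ℝ), φ f = sInt s f)
    (x : X)
    (hx : ‖φ - s {x} • ContinuousMap.evalCLM ℝ x‖ ≤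
      (‖φ‖ - sqrt (‖φ‖^2 - 4*ε))/2) :
    ∀ f : C(X, ℝ), |f x| = 1 → ‖f‖ = 1 → sqrt (‖φ‖^2 - 4*ε) ≤ |φ f| :=
  stmt6_general ε φ s x hx
end

section
/- Let 0 < ε < 1/4, let k be an even positive integer, and let X be a finite set of cardinality k. If φ is a norm-one ε-disjointness preserving continuous linear functional on C(X) (i.e., on K^X with sup norm), then there exists x ∈ X with |λ({x})| ≥ (1 + √(1−4ε))/k, where λ is the measure representing φ. -/
open MeasureTheory Real

/-!
Let `S = ∑ |a x| ≥ ‖φ‖ = 1`. Split `X` into two halves `A`, `Aᶜ` of size `k/2` with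
`u = ∑_A |a| ≥ v = ∑_{Aᶜ} |a|`. Testing `φ` on `sign a` restricted to `A` and to `Aᶜ`, two
disjoint norm-one functions, gives `u * v ≤ ε`; as `u + v ≥ 1` this forces `u(1 - u) ≤ ε` with
`u ≥ 1/2`, hence `u ≥ (1 + √(1 - 4ε)) / 2`, and some point of `A` carries at least the average
`u / (k/2)`.
-/

lemma one_add_sqrt_le_two_mul {u v ε : ℝ} (hv : 0 ≤ v) (hvu : v ≤ u) (huv : 1 ≤ u + v)
    (hε : u * v ≤ ε) : 1 + √(1 - 4 * ε) ≤ 2 * u := by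
  by_contra! h
  have hr : 0 < √(1 - 4 * ε) := by linarith
  have hsq : √(1 - 4 * ε) ^ 2 = 1 - 4 * ε := sq_sqrt (sqrt_pos.mp hr).le
  -- `(2u - 1)² = 1 - 4u(1 - u) ≥ 1 - 4uv ≥ 1 - 4ε`, with `0 ≤ 2u - 1 < √(1 - 4ε)`
  nlinarith

lemma Finset.exists_card_eq_sum_le_two_mul_sum {X : Type*} [Fintype X] {m : ℕ}
    (hcard : Fintype.card X = m + m) (w : X → ℝ) :
    ∃ A : Finset X, A.card = m ∧ ∑ x, w x ≤ 2 * ∑ x ∈ A, w x := by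
  classical
  obtain ⟨A, -, hA⟩ := Finset.exists_subset_card_eq (s := (Finset.univ : Finset X)) (n := m)
    (by rw [Finset.card_univ, hcard]; omega)
  have hsplit := Finset.sum_add_sum_compl A w
  by_cases h : ∑ x, w x ≤ 2 * ∑ x ∈ A, w x
  · exact ⟨A, hA, h⟩
  · refine ⟨Aᶜ, by rw [Finset.card_compl, hcard, hA]; omega, by linarith⟩

lemma opNorm_le_sum_abs {X : Type*} [Fintype X] [TopologicalSpace X] (a : X → ℝ)
    (φ : C(X, ℝ) →L[ℝ] ℝ) (hφ : ∀ f : C(X, ℝ), φ f = ∑ x, a x * f x) :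
    ‖φ‖ ≤ ∑ x, |a x| := by
  refine φ.opNorm_le_bound (Finset.sum_nonneg fun _ _ => abs_nonneg _) fun f => ?_
  calc |φ f| ≤ ∑ x, |a x * f x| := hφ f ▸ Finset.abs_sum_le_sum_abs _ _
    _ ≤ ∑ x, |a x| * ‖f‖ := Finset.sum_le_sum fun x _ => by
        rw [abs_mul]; exact mul_le_mul_of_nonneg_left (f.norm_coe_le_norm x) (abs_nonneg _)
    _ = (∑ x, |a x|) * ‖f‖ := (Finset.sum_mul _ _ _).symm

lemma ContinuousMap.norm_eq_one_of_abs {X : Type*} [TopologicalSpace X] [CompactSpace X]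
    (f : C(X, ℝ)) (hle : ∀ x, |f x| ≤ 1) (heq : ∃ x, |f x| = 1) : ‖f‖ = 1 := by
  obtain ⟨x, hx⟩ := heq
  refine le_antisymm ((f.norm_le zero_le_one).mpr hle) ?_
  calc (1 : ℝ) = ‖f x‖ := hx.symm
    _ ≤ ‖f‖ := f.norm_coe_le_norm x

section SignOn

variable {X : Type*} [TopologicalSpace X] [DiscreteTopology X] [DecidableEq X]

-- Not `Real.sign`: the test function must have modulus one also where `a` vanishes.
noncomputable def signOn (a : X → ℝ) (A : Finset X) : C(X, ℝ) :=
  ⟨fun x => if x ∈ A then (if 0 ≤ a x then 1 else -1) else 0, continuous_of_discreteTopology⟩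

@[simp]
lemma signOn_apply (a : X → ℝ) (A : Finset X) (x : X) :
    signOn a A x = if x ∈ A then (if 0 ≤ a x then 1 else -1) else 0 := rfl

lemma norm_signOn [Fintype X] (a : X → ℝ) {A : Finset X} (hA : A.Nonempty) :
    ‖signOn a A‖ = 1 := by
  refine (signOn a A).norm_eq_one_of_abs (fun x => ?_) ?_
  · rw [signOn_apply]; split_ifs <;> norm_num
  · obtain ⟨x, hx⟩ := hA
    exact ⟨x, by rw [signOn_apply]; split_ifs <;> norm_num⟩

lemma signOn_mul_signOn_compl [Fintype X] (a : X → ℝ) (A : Finset X) :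
    signOn a A * signOn a Aᶜ = 0 := by
  ext x
  by_cases hx : x ∈ A <;> simp [hx]

lemma sum_mul_signOn [Fintype X] (a : X → ℝ) (A : Finset X) :
    ∑ x, a x * signOn a A x = ∑ x ∈ A, |a x| := by
  have h (x : X) : a x * signOn a A x = if x ∈ A then |a x| else 0 := by
    rw [signOn_apply]
    split_ifs with hx ha
    · rw [mul_one, abs_of_nonneg ha]
    · rw [mul_neg_one, abs_of_neg (not_le.mp ha)]
    · rw [mul_zero]
  simp only [h, Finset.sum_ite_mem, Finset.univ_inter]

lemma IsEDP.sum_abs_mul_sum_abs_compl_le [Fintype X] {ε : ℝ} {a : X → ℝ}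
    {φ : C(X, ℝ) →L[ℝ] ℝ} (hdp : IsEDP ε φ)
    (hφ : ∀ f : C(X, ℝ), φ f = ∑ x, a x * f x) {A : Finset X} (hA : A.Nonempty)
    (hAc : Aᶜ.Nonempty) :
    (∑ x ∈ A, |a x|) * ∑ x ∈ Aᶜ, |a x| ≤ ε := by
  have h := hdp _ _ (norm_signOn a hA) (norm_signOn a hAc) (signOn_mul_signOn_compl a A)
  rwa [hφ, hφ, sum_mul_signOn, sum_mul_signOn, abs_of_nonneg (by positivity),
    abs_of_nonneg (by positivity)] at h

end SignOn

theorem stmt7_general {X : Type*} [Fintype X] [TopologicalSpace X] [DiscreteTopology X]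
    (ε : ℝ)
    (k : ℕ) (hkeven : Even k) (hcard : Fintype.card X = k)
    (a : X → ℝ) (φ : C(X, ℝ) →L[ℝ] ℝ)
    (hφ : ∀ f : C(X, ℝ), φ f = ∑ x : X, a x * f x)
    (hnorm : ‖φ‖ = 1) (hdp : IsEDP ε φ) :
    ∃ x : X, (1 + sqrt (1 - 4*ε))/(k : ℝ) ≤ |a x| := by
  classical
  obtain ⟨m, rfl⟩ := hkeven
  have hS : 1 ≤ ∑ x, |a x| := hnorm ▸ opNorm_le_sum_abs a φ hφ
  have hm : 0 < m := by
    by_contra! h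
    have : IsEmpty X := Fintype.card_eq_zero_iff.mp (by omega)
    norm_num at hS
  obtain ⟨A, hAcard, hA⟩ := Finset.exists_card_eq_sum_le_two_mul_sum hcard fun x => |a x|
  have hAne : A.Nonempty := Finset.card_pos.mp (by omega)
  have hAcne : Aᶜ.Nonempty := Finset.card_pos.mp (by rw [Finset.card_compl]; omega)
  have hsplit := Finset.sum_add_sum_compl A fun x => |a x|
  have hbig : 1 + √(1 - 4 * ε) ≤ 2 * ∑ x ∈ A, |a x| :=
    one_add_sqrt_le_two_mul (by positivity) (by linarith) (by linarith)
      (hdp.sum_abs_mul_sum_abs_compl_le hφ hAne hAcne)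
  refine Finset.exists_le_of_sum_le hAne ?_ |>.imp fun x hx => hx.2
  have hm' : (0 : ℝ) < m := by exact_mod_cast hm
  calc ∑ _x ∈ A, (1 + √(1 - 4 * ε)) / ((m + m : ℕ) : ℝ)
      = (1 + √(1 - 4 * ε)) / 2 := by
        rw [Finset.sum_const, hAcard, nsmul_eq_mul]; push_cast; field_simp; ring
    _ ≤ ∑ x ∈ A, |a x| := by linarith

theorem stmt7 {X : Type*} [Fintype X] [TopologicalSpace X] [DiscreteTopology X]
    (ε : ℝ) (hε : 0 < ε) (hε' : ε < 1/4)
    (k : ℕ) (hkpos : 0 < k) (hkeven : Even k) (hcard : Fintype.card X = k)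
    (a : X → ℝ) (φ : C(X, ℝ) →L[ℝ] ℝ)
    (hφ : ∀ f : C(X, ℝ), φ f = ∑ x : X, a x * f x)
    (hnorm : ‖φ‖ = 1) (hdp : IsEDP ε φ) :
    ∃ x : X, (1 + sqrt (1 - 4*ε))/(k : ℝ) ≤ |a x| :=
  stmt7_general ε k hkeven hcard a φ hφ hnorm hdp
end

section
/- Let X be a finite set of odd cardinality k ≥ 3, let x_1, …, x_k enumerate X, and define φ := (1/k) Σ_{i=1}^k δ_{x_i} on C(X). Then ‖φ‖ = 1, φ is ω_k-disjointness preserving where ω_k := (k²−1)/(4k²), and ‖φ − ψ‖ ≥ 1 − 1/k for every weighted evaluation functional ψ = α δ_x (α ∈ K, x ∈ X). -/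
open MeasureTheory Real

/-!
The average `φ` of the `k` point evaluations satisfies `|φ f| ≤ |supp f| / k` for `‖f‖ ≤ 1`.
Disjointly supported `f`, `g` have `|supp f| + |supp g| ≤ k`, and for odd `k` the product of
two natural numbers with sum at most `k` is at most `(k² - 1) / 4`. The indicator of the
complement of a point `x` is killed by `δ_x` and has average `1 - 1/k`, which bounds the
distance from `φ` to every `α δ_x`.
-/

theorem Nat.four_mul_mul_add_one_le_sq_of_odd {a b k : ℕ} (hk : Odd k) (hab : a + b ≤ k) :
    4 * (a * b) + 1 ≤ k ^ 2 := by
  have hsq : 4 * (a * b) + ((a : ℤ) - b) ^ 2 = (a + b) ^ 2 := by ring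
  rcases hab.lt_or_eq with hlt | rfl
  · nlinarith [sq_nonneg ((a : ℤ) - b)]
  · have hne : (a : ℤ) - b ≠ 0 := by
      rintro h
      obtain rfl : a = b := by omega
      exact Nat.not_even_iff_odd.mpr hk ⟨a, rfl⟩
    have hdiff : 1 ≤ ((a : ℤ) - b) ^ 2 := one_le_sq_iff_one_le_abs _ |>.mpr (Int.one_le_abs hne)
    zify
    linarith

namespace ContinuousMap

variable {X : Type*} [Fintype X] [TopologicalSpace X]

theorem abs_sum_le_card_support_mul_norm (f : C(X, ℝ)) :
    |∑ x, f x| ≤ {x | f x ≠ 0}.toFinset.card * ‖f‖ := by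
  calc |∑ x, f x| = ‖∑ x ∈ {x | f x ≠ 0}.toFinset, f x‖ := by
        rw [Set.toFinset_ofPred, Finset.sum_filter_ne_zero, Real.norm_eq_abs]
    _ ≤ ∑ x ∈ {x | f x ≠ 0}.toFinset, ‖f x‖ := norm_sum_le _ _
    _ ≤ {x | f x ≠ 0}.toFinset.card • ‖f‖ :=
        Finset.sum_le_card_nsmul _ _ _ fun x _ ↦ f.norm_coe_le_norm x
    _ = _ := nsmul_eq_mul _ _

theorem card_support_add_card_support_le {f g : C(X, ℝ)} (hfg : f * g = 0) :
    {x | f x ≠ 0}.toFinset.card + {x | g x ≠ 0}.toFinset.card ≤ Fintype.card X := by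
  classical
  have hdisj : Disjoint {x | f x ≠ 0}.toFinset {x | g x ≠ 0}.toFinset := by
    refine Set.disjoint_toFinset.mpr (Set.disjoint_left.mpr fun x hf hg ↦ ?_)
    have : f x * g x = 0 := congrArg (· x) hfg
    exact (mul_ne_zero hf hg) this
  rw [← Finset.card_union_of_disjoint hdisj]
  exact Finset.card_le_univ _

end ContinuousMap

section Averaging

variable {X : Type*} [Fintype X] [TopologicalSpace X] {φ : C(X, ℝ) →L[ℝ] ℝ}

theorem abs_averaging_le (hφ : ∀ f : C(X, ℝ), φ f = 1 / (Fintype.card X : ℝ) * ∑ x, f x)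
    (f : C(X, ℝ)) :
    |φ f| ≤ {x | f x ≠ 0}.toFinset.card / (Fintype.card X : ℝ) * ‖f‖ := by
  rw [hφ, abs_mul, abs_of_nonneg (by positivity), one_div, div_eq_inv_mul, mul_assoc]
  gcongr
  exact f.abs_sum_le_card_support_mul_norm

theorem norm_averaging [Nonempty X]
    (hφ : ∀ f : C(X, ℝ), φ f = 1 / (Fintype.card X : ℝ) * ∑ x, f x) : ‖φ‖ = 1 := by
  refine le_antisymm (φ.opNorm_le_bound zero_le_one fun f ↦ ?_) ?_
  · refine (abs_averaging_le hφ f).trans (mul_le_mul_of_nonneg_right ?_ (norm_nonneg f))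
    rw [div_le_one (by positivity)]
    exact_mod_cast Finset.card_le_univ _
  · have hφ1 : φ 1 = 1 := by simp [hφ]
    simpa [hφ1] using φ.le_opNorm 1

theorem isEDP_averaging (hodd : Odd (Fintype.card X))
    (hφ : ∀ f : C(X, ℝ), φ f = 1 / (Fintype.card X : ℝ) * ∑ x, f x) :
    IsEDP (((Fintype.card X : ℝ) ^ 2 - 1) / (4 * (Fintype.card X : ℝ) ^ 2)) φ := by
  intro f g hf hg hfg
  set n := Fintype.card X
  set a := {x | f x ≠ 0}.toFinset.card
  set b := {x | g x ≠ 0}.toFinset.card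
  have hn : (0 : ℝ) < n := by exact_mod_cast hodd.pos
  have hab : (4 * (a * b) + 1 : ℝ) ≤ n ^ 2 := by
    exact_mod_cast Nat.four_mul_mul_add_one_le_sq_of_odd hodd
      (ContinuousMap.card_support_add_card_support_le hfg)
  have hfa := abs_averaging_le hφ f
  have hgb := abs_averaging_le hφ g
  rw [hf, mul_one] at hfa
  rw [hg, mul_one] at hgb
  calc |φ f| * |φ g| ≤ a / n * (b / n) :=
        mul_le_mul hfa hgb (abs_nonneg _) (by positivity)
    _ = (a * b) / n ^ 2 := by ring
    _ ≤ (n ^ 2 - 1) / (4 * n ^ 2) := by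
        rw [div_le_div_iff₀ (by positivity) (by positivity)]
        nlinarith

theorem one_sub_inv_card_le_norm_averaging_sub_smul_eval [DiscreteTopology X]
    (hφ : ∀ f : C(X, ℝ), φ f = 1 / (Fintype.card X : ℝ) * ∑ x, f x) (α : ℝ) (x : X) :
    1 - 1 / (Fintype.card X : ℝ) ≤ ‖φ - α • ContinuousMap.evalCLM ℝ x‖ := by
  classical
  have : Nonempty X := ⟨x⟩
  set ψ : C(X, ℝ) →L[ℝ] ℝ := φ - α • ContinuousMap.evalCLM ℝ x
  let f : C(X, ℝ) := ⟨fun y ↦ if y = x then 0 else 1, continuous_of_discreteTopology⟩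
  have hf : ‖f‖ ≤ 1 := (ContinuousMap.norm_le _ zero_le_one).mpr fun y ↦ by
    by_cases hy : y = x <;> simp [f, hy]
  have hsum : ∑ y, f y = (Fintype.card X : ℝ) - 1 := by
    simp [f, Finset.sum_ite, Finset.filter_ne', Nat.cast_sub Fintype.card_pos]
  have hψf : ψ f = 1 - 1 / (Fintype.card X : ℝ) := by
    have hn : (Fintype.card X : ℝ) ≠ 0 := by positivity
    have hfx : f x = 0 := by simp [f]
    simp only [ψ, sub_apply, smul_apply, ContinuousMap.evalCLM_apply, hfx, smul_zero, sub_zero,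
      hφ, hsum]
    field_simp
  calc 1 - 1 / (Fintype.card X : ℝ) ≤ ‖ψ f‖ := by
        rw [hψf, Real.norm_eq_abs]; exact le_abs_self _
    _ ≤ ‖ψ‖ * ‖f‖ := ψ.le_opNorm f
    _ ≤ ‖ψ‖ := mul_le_of_le_one_right (norm_nonneg ψ) hf

end Averaging

theorem stmt12_general {X : Type*} [Fintype X] [TopologicalSpace X] [DiscreteTopology X]
    (k : ℕ) (hk : Odd k) (e : X ≃ Fin k)
    (φ : C(X, ℝ) →L[ℝ] ℝ)
    (hφ : ∀ f : C(X, ℝ), φ f = (1/(k : ℝ)) * ∑ x : X, f x) :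
    ‖φ‖ = 1 ∧ IsEDP (((k:ℝ)^2 - 1)/(4*(k:ℝ)^2)) φ ∧
    ∀ (α : ℝ) (x : X), 1 - 1/(k : ℝ) ≤ ‖φ - α • ContinuousMap.evalCLM ℝ x‖ := by
  obtain rfl : Fintype.card X = k := by simpa using Fintype.card_congr e
  have : Nonempty X := Fintype.card_pos_iff.mp hk.pos
  exact ⟨norm_averaging hφ, isEDP_averaging hk hφ,
    one_sub_inv_card_le_norm_averaging_sub_smul_eval hφ⟩

theorem stmt12 {X : Type*} [Fintype X] [TopologicalSpace X] [DiscreteTopology X]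
    (k : ℕ) (hk : Odd k) (hk3 : 3 ≤ k) (e : X ≃ Fin k)
    (φ : C(X, ℝ) →L[ℝ] ℝ)
    (hφ : ∀ f : C(X, ℝ), φ f = (1/(k : ℝ)) * ∑ x : X, f x) :
    ‖φ‖ = 1 ∧ IsEDP (((k:ℝ)^2 - 1)/(4*(k:ℝ)^2)) φ ∧
    ∀ (α : ℝ) (x : X), 1 - 1/(k : ℝ) ≤ ‖φ - α • ContinuousMap.evalCLM ℝ x‖ :=
  stmt12_general k hk e φ hφ
end

section
/- Let 0 < ε < 1/4 and let X be a compact Hausdorff space with at least 2n points, where n ∈ ℕ satisfies ω_{2n−1} ≤ ε < ω_{2n+1} and ω_m := (m²−1)/(4m²). Pick 2n distinct points x_1, …, x_{2n} ∈ X and define φ := ((1+√(1−4ε))/(2n)) Σ_{i=1}^{2n−1} δ_{x_i} + ((1−(2n−1)√(1−4ε))/(2n)) δ_{x_{2n}}. Then ‖φ‖ = 1, φ is ε-disjointness preserving, and ‖φ − ψ‖ ≥ (2n−1−√(1−4ε))/(2n) for every weighted evaluation functional ψ = α δ_x. -/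
open MeasureTheory Real

/-!
`φ` is a convex combination `∑ wᵢ δ_{pᵢ}` of evaluations at distinct points, so `‖φ‖ = 1`.
If `fg = 0` and `‖f‖ = ‖g‖ = 1`, then `|φ f| ≤ t` and `|φ g| ≤ 1 - t`, where `t` is the total weight
of the points where `f` does not vanish; hence `|φ f| |φ g| ≤ t (1 - t)`, which is at most `ε` as
soon as `|2t - 1| ≥ √(1 - 4ε)`. Up to passing to the complement, `t = k (1 + √(1 - 4ε)) / (2n)` for
some `k ∈ ℕ`, and the condition `ω_{2n-1} ≤ ε`, i.e. `(2n - 1) √(1 - 4ε) ≤ 1`, is exactly what makes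
`|2t - 1| ≥ √(1 - 4ε)` hold for every `k`. Finally, testing `φ - α δ_y` on an Urysohn function
vanishing at `y` and equal to `1` at the other points `pᵢ` gives the distance bound `1 - maxᵢ wᵢ`.
-/

open Function

section ConvexCombinationOfEvaluations

variable {X ι : Type*} [TopologicalSpace X] [CompactSpace X] [Fintype ι]
  {φ : C(X, ℝ) →L[ℝ] ℝ} {w : ι → ℝ} {p : ι → X}

lemma abs_apply_le_sum_mul_norm (hφ : ∀ f : C(X, ℝ), φ f = ∑ i, w i * f (p i))
    (hw : ∀ i, 0 ≤ w i) {f : C(X, ℝ)} {S : Finset ι} (hS : ∀ i ∉ S, f (p i) = 0) :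
    |φ f| ≤ (∑ i ∈ S, w i) * ‖f‖ := by
  rw [hφ, ← Finset.sum_subset (Finset.subset_univ S) fun i _ hi => by rw [hS i hi, mul_zero],
    Finset.sum_mul]
  refine (Finset.abs_sum_le_sum_abs _ _).trans (Finset.sum_le_sum fun i _ => ?_)
  rw [abs_mul, abs_of_nonneg (hw i)]
  exact mul_le_mul_of_nonneg_left (f.norm_coe_le_norm (p i)) (hw i)

lemma norm_eq_one_of_sum_eq_one (hφ : ∀ f : C(X, ℝ), φ f = ∑ i, w i * f (p i))
    (hw : ∀ i, 0 ≤ w i) (hw1 : ∑ i, w i = 1) : ‖φ‖ = 1 := by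
  obtain ⟨i⟩ : Nonempty ι := (Finset.nonempty_of_sum_ne_zero (hw1 ▸ one_ne_zero)).to_type
  have : Nonempty X := ⟨p i⟩
  refine le_antisymm (φ.opNorm_le_bound zero_le_one fun f => ?_) ?_
  · simpa [hw1] using abs_apply_le_sum_mul_norm hφ hw (S := Finset.univ) (f := f) (by simp)
  · simpa [hφ, hw1] using φ.le_opNorm 1

lemma isEDP_of_forall_sum_mul_one_sub_le (hφ : ∀ f : C(X, ℝ), φ f = ∑ i, w i * f (p i))
    (hw : ∀ i, 0 ≤ w i) (hw1 : ∑ i, w i = 1) {ε : ℝ}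
    (hε : ∀ S : Finset ι, (∑ i ∈ S, w i) * (1 - ∑ i ∈ S, w i) ≤ ε) : IsEDP ε φ := by
  classical
  intro f g hf hg hfg
  set S := Finset.univ.filter fun i => f (p i) ≠ 0
  have hφf : |φ f| ≤ ∑ i ∈ S, w i := by
    simpa [hf] using abs_apply_le_sum_mul_norm hφ hw (S := S) (f := f) (by simp [S])
  have hφg : |φ g| ≤ 1 - ∑ i ∈ S, w i := by
    rw [← hw1, ← Finset.sum_compl_add_sum S, add_sub_cancel_right]
    refine (abs_apply_le_sum_mul_norm hφ hw fun i hi => ?_).trans_eq (by rw [hg, mul_one])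
    have hfgi : f (p i) * g (p i) = 0 := by simpa using DFunLike.congr_fun hfg (p i)
    exact (mul_eq_zero.1 hfgi).resolve_left (by simpa [S] using hi)
  exact (mul_le_mul hφf hφg (abs_nonneg _) ((abs_nonneg _).trans hφf)).trans (hε S)

lemma one_sub_le_norm_sub_smul_evalCLM [T2Space X]
    (hφ : ∀ f : C(X, ℝ), φ f = ∑ i, w i * f (p i)) (hw : ∀ i, 0 ≤ w i) (hw1 : ∑ i, w i = 1)
    (hp : Injective p) {c : ℝ} (hc : ∀ i, w i ≤ c) (α : ℝ) (y : X) :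
    1 - c ≤ ‖φ - α • ContinuousMap.evalCLM ℝ y‖ := by
  classical
  obtain ⟨f, hfy, hf1, hf01⟩ := exists_continuous_zero_one_of_isClosed (s := {y})
    (t := Set.range p \ {y}) isClosed_singleton ((Set.finite_range p).sdiff).isClosed
    (Set.disjoint_singleton_left.2 fun h => h.2 rfl)
  have hfy' : f y = 0 := hfy rfl
  have hfp : ∀ i, p i ≠ y → f (p i) = 1 := fun i hi => hf1 ⟨Set.mem_range_self i, hi⟩
  have hfnorm : ‖f‖ ≤ 1 := (ContinuousMap.norm_le f zero_le_one).2 fun z =>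
    abs_le.2 ⟨by linarith [(hf01 z).1], (hf01 z).2⟩
  have hφf : 1 - c ≤ φ f := by
    by_cases hy : ∃ j, p j = y
    · obtain ⟨j, rfl⟩ := hy
      rw [hφ, ← Finset.add_sum_erase _ _ (Finset.mem_univ j), hfy', mul_zero, zero_add,
        Finset.sum_congr rfl fun i hi => by
          rw [hfp i (hp.ne (Finset.ne_of_mem_erase hi)), mul_one],
        Finset.sum_erase_eq_sub (Finset.mem_univ j), hw1]
      linarith [hc j]
    · obtain ⟨i, -, -⟩ := Finset.exists_ne_zero_of_sum_ne_zero (hw1 ▸ one_ne_zero)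
      have hφf1 : φ f = 1 := by
        rw [hφ, ← hw1]
        exact Finset.sum_congr rfl fun i _ => by rw [hfp i fun h => hy ⟨i, h⟩, mul_one]
      linarith [hw i, hc i]
  calc 1 - c ≤ φ f := hφf
    _ = (φ - α • ContinuousMap.evalCLM ℝ y : C(X, ℝ) →L[ℝ] ℝ) f := by simp [hfy']
    _ ≤ ‖φ - α • ContinuousMap.evalCLM ℝ y‖ :=
      (le_abs_self _).trans ((φ - α • ContinuousMap.evalCLM ℝ y).unit_le_opNorm f hfnorm)

end ConvexCombinationOfEvaluations

lemma mul_one_sub_le_of_sqrt_le_abs {ε t : ℝ} (h : √(1 - 4 * ε) ≤ |2 * t - 1|) :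
    t * (1 - t) ≤ ε := by
  rcases le_total 0 (1 - 4 * ε) with hε | hε
  · have := pow_le_pow_left₀ (sqrt_nonneg _) h 2
    rw [sq_sqrt hε, sq_abs] at this
    nlinarith
  · nlinarith [sq_nonneg (2 * t - 1)]

lemma mul_sqrt_le_one_of_div_le {m ε : ℝ} (h : (m ^ 2 - 1) / (4 * m ^ 2) ≤ ε) :
    m * √(1 - 4 * ε) ≤ 1 := by
  rcases le_or_gt m 0 with hm | hm
  · nlinarith [sqrt_nonneg (1 - 4 * ε)]
  · rw [div_le_iff₀ (by positivity)] at h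
    rw [← sqrt_sq hm.le, ← sqrt_mul (sq_nonneg m), sqrt_le_one]
    nlinarith

lemma le_abs_two_mul_natCast_mul_sub_one {n : ℕ} (hn : 0 < n) {s : ℝ} (hs : 0 ≤ s)
    (hs1 : (2 * n - 1) * s ≤ 1) (k : ℕ) : s ≤ |2 * (k * ((1 + s) / (2 * n))) - 1| := by
  have hn' : (0 : ℝ) < n := by exact_mod_cast hn
  have : 2 * (k * ((1 + s) / (2 * n))) - 1 = (k * (1 + s) - n) / n := by field_simp
  rw [this, le_abs, le_div_iff₀ hn', ← neg_div, le_div_iff₀ hn']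
  rcases le_or_gt n k with hk | hk
  · have : (n : ℝ) ≤ k := by exact_mod_cast hk
    left; nlinarith
  · have : (k : ℝ) + 1 ≤ n := by exact_mod_cast hk
    right; nlinarith

lemma sum_optionElim_mul_one_sub_le {ι : Type*} [Fintype ι] {a b ε : ℝ}
    (hw1 : ∑ o : Option ι, o.elim b (fun _ => a) = 1) (ha : ∀ k : ℕ, k * a * (1 - k * a) ≤ ε)
    (S : Finset (Option ι)) :
    (∑ o ∈ S, o.elim b fun _ => a) * (1 - ∑ o ∈ S, o.elim b fun _ => a) ≤ ε := by
  classical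
  have hsum : ∀ T : Finset (Option ι), none ∉ T → ∑ o ∈ T, o.elim b (fun _ => a) = T.card * a := by
    intro T hT
    rw [Finset.sum_congr rfl fun o ho => ?_, Finset.sum_const, nsmul_eq_mul]
    obtain ⟨i, rfl⟩ := Option.ne_none_iff_exists'.1 (ne_of_mem_of_not_mem ho hT)
    rfl
  by_cases hS : none ∈ S
  · have hcompl := hsum Sᶜ (Finset.notMem_compl.2 hS)
    rw [← Finset.sum_compl_add_sum S, hcompl] at hw1
    rw [show ∑ o ∈ S, o.elim b (fun _ => a) = 1 - Sᶜ.card * a by linarith]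
    linarith [ha Sᶜ.card]
  · simpa [hsum S hS] using ha S.card

theorem stmt13 {X : Type*} [TopologicalSpace X] [CompactSpace X] [T2Space X]
    (ε : ℝ)
    (n : ℕ) (hn : 0 < n)
    (hω₁ : ((2*(n:ℝ) - 1)^2 - 1)/(4*(2*(n:ℝ) - 1)^2) ≤ ε)
    (x : Fin (2*n) ↪ X)
    (φ : C(X, ℝ) →L[ℝ] ℝ)
    (hφ : ∀ f : C(X, ℝ), φ f =
      ((1 + sqrt (1 - 4*ε))/(2*(n:ℝ))) *
        (∑ i : Fin (2*n - 1), f (x (Fin.castLE (by omega) i))) +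
      ((1 - (2*(n:ℝ) - 1) * sqrt (1 - 4*ε))/(2*(n:ℝ))) *
        f (x ⟨2*n - 1, by omega⟩)) :
    ‖φ‖ = 1 ∧ IsEDP ε φ ∧
    ∀ (α : ℝ) (y : X),
      (2*(n:ℝ) - 1 - sqrt (1 - 4*ε))/(2*(n:ℝ)) ≤
        ‖φ - α • ContinuousMap.evalCLM ℝ y‖ := by
  set s := √(1 - 4 * ε)
  have hs : (2 * (n : ℝ) - 1) * s ≤ 1 := mul_sqrt_le_one_of_div_le hω₁
  set a := (1 + s) / (2 * n)
  set b := (1 - (2 * n - 1) * s) / (2 * n)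
  -- `none` indexes the last point `x (2n - 1)`, of weight `b`; the others have weight `a`
  let w : Option (Fin (2 * n - 1)) → ℝ := fun o => o.elim b fun _ => a
  let p : Option (Fin (2 * n - 1)) → X :=
    fun o => o.elim (x ⟨2 * n - 1, by omega⟩) fun i => x (Fin.castLE (by omega) i)
  have hφ' : ∀ f : C(X, ℝ), φ f = ∑ o, w o * f (p o) := fun f => by
    rw [hφ, Fintype.sum_option, Finset.mul_sum, add_comm]
    rfl
  have hw : ∀ o, 0 ≤ w o := by
    rintro (_ | _) <;> exact div_nonneg (by linarith [sqrt_nonneg (1 - 4 * ε)]) (by positivity)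
  have hw1 : ∑ o, w o = 1 := by
    simp only [w, a, b, Fintype.sum_option, Option.elim, Finset.sum_const, Finset.card_univ,
      Fintype.card_fin, nsmul_eq_mul, Nat.cast_sub (by omega : 1 ≤ 2 * n)]
    field_simp
    push_cast
    ring
  have hp : Injective p := by
    rintro (_ | i) (_ | j) h <;> simp only [p, Option.elim, x.injective.eq_iff, Fin.ext_iff,
      Fin.val_castLE, Option.some.injEq] at h ⊢ <;> omega
  refine ⟨norm_eq_one_of_sum_eq_one hφ' hw hw1,
    isEDP_of_forall_sum_mul_one_sub_le hφ' hw hw1 (sum_optionElim_mul_one_sub_le hw1 fun k =>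
      mul_one_sub_le_of_sqrt_le_abs (le_abs_two_mul_natCast_mul_sub_one hn (sqrt_nonneg _) hs k)),
    fun α y => ?_⟩
  have hwa : ∀ o, w o ≤ a := by
    rintro (_ | _)
    · exact div_le_div_of_nonneg_right (by nlinarith [sqrt_nonneg (1 - 4 * ε)]) (by positivity)
    · exact le_rfl
  convert one_sub_le_norm_sub_smul_evalCLM hφ' hw hw1 hp hwa α y using 1
  simp only [a]
  field_simp
  ring
end

section
/- Let 0 < ε < 1/4 and let n ≥ 2 be an integer with n ≠ 2. Define γ(t) := t − √(t² − 4ε) and η(t) := t − (t + √(t² − 4ε))/n on [2√ε, 1]. Then min(γ(t), η(t)) ≤ η(2√ε) = 2(n−1)√ε / n for all t ∈ [2√ε, 1]. -/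
/-!
Write `a = √ε`, `u = t - 2a ≥ 0` and `B = 2(N - 1)a/N`, so that `t² - 4ε = u² + 4au`.
After squaring, `γ(t) ≤ B` amounts to `a ≤ u N(N - 1)` and `η(t) ≤ B` to `u N(N - 2) ≤ 4a`;
every `u ≥ 0` satisfies one of the two.
-/

open Real

namespace Real

variable {a t N : ℝ}

lemma sub_sub_add_sqrt_sq_sub_div_eq (hN : N ≠ 0) :
    2 * a - (2 * a + √((2 * a) ^ 2 - 4 * a ^ 2)) / N = 2 * (N - 1) * a / N := by
  have hzero : (2 * a) ^ 2 - 4 * a ^ 2 = 0 := by ring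
  rw [hzero, sqrt_zero]
  field_simp
  ring

lemma sub_sqrt_sq_sub_le_of_le (ha : 0 ≤ a) (hN : 0 < N)
    (h : a ≤ (t - 2 * a) * (N * (N - 1))) :
    t - √(t ^ 2 - 4 * a ^ 2) ≤ 2 * (N - 1) * a / N := by
  have hshift : t - 2 * (N - 1) * a / N = (t - 2 * a) + 2 * a / N := by
    field_simp
    ring
  suffices ((t - 2 * a) + 2 * a / N) ^ 2 ≤ t ^ 2 - 4 * a ^ 2 by
    linarith [le_sqrt_of_sq_le this]
  have hsq : ((t - 2 * a) + 2 * a / N) ^ 2 = t ^ 2 - 4 * a ^ 2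
      - 4 * a * ((t - 2 * a) * (N * (N - 1)) - a) / N ^ 2 := by
    field_simp
    ring
  rw [hsq, sub_le_self_iff]
  have : 0 ≤ (t - 2 * a) * (N * (N - 1)) - a := by linarith
  positivity

lemma sub_add_sqrt_sq_sub_div_le_of_le (hN : 1 ≤ N) (ht : 2 * a ≤ t)
    (h : (t - 2 * a) * (N * (N - 2)) ≤ 4 * a) :
    t - (t + √(t ^ 2 - 4 * a ^ 2)) / N ≤ 2 * (N - 1) * a / N := by
  have hu : 0 ≤ t - 2 * a := by linarith
  have hsqrt : (N - 1) * (t - 2 * a) ≤ √(t ^ 2 - 4 * a ^ 2) :=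
    le_sqrt_of_sq_le (by nlinarith [mul_le_mul_of_nonneg_left h hu])
  rw [sub_le_iff_le_add, ← add_div, le_div_iff₀ (by linarith)]
  linarith

lemma min_sub_sqrt_sq_sub_le (ha : 0 ≤ a) (hN : 1 ≤ N) (ht : 2 * a ≤ t) :
    min (t - √(t ^ 2 - 4 * a ^ 2)) (t - (t + √(t ^ 2 - 4 * a ^ 2)) / N)
      ≤ 2 * (N - 1) * a / N := by
  by_cases h : a ≤ (t - 2 * a) * (N * (N - 1))
  · exact min_le_of_left_le (sub_sqrt_sq_sub_le_of_le ha (by linarith) h)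
  · refine min_le_of_right_le (sub_add_sqrt_sq_sub_div_le_of_le hN ht ?_)
    have hu : 0 ≤ (t - 2 * a) * N := mul_nonneg (by linarith) (by linarith)
    nlinarith

end Real

theorem stmt14_general (ε : ℝ) (hε : 0 < ε)
    (n : ℕ) (hn : 2 ≤ n) :
    (2 * sqrt ε - (2 * sqrt ε + sqrt ((2 * sqrt ε)^2 - 4*ε))/(n : ℝ) =
      2 * ((n : ℝ) - 1) * sqrt ε / (n : ℝ)) ∧
    ∀ t ∈ Set.Icc (2 * sqrt ε) 1,
      min (t - sqrt (t^2 - 4*ε)) (t - (t + sqrt (t^2 - 4*ε))/(n : ℝ)) ≤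
        2 * ((n : ℝ) - 1) * sqrt ε / (n : ℝ) := by
  have hN : (1 : ℝ) ≤ n := by exact_mod_cast (by omega : 1 ≤ n)
  obtain ⟨a, ha, rfl⟩ : ∃ a, 0 ≤ a ∧ a ^ 2 = ε := ⟨√ε, sqrt_nonneg ε, sq_sqrt hε.le⟩
  rw [sqrt_sq ha]
  exact ⟨sub_sub_add_sqrt_sq_sub_div_eq (by linarith),
    fun t ht => min_sub_sqrt_sq_sub_le ha hN ht.1⟩

theorem stmt14 (ε : ℝ) (hε : 0 < ε) (hε' : ε < 1/4)
    (n : ℕ) (hn : 2 ≤ n) (hn2 : n ≠ 2) :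
    (2 * sqrt ε - (2 * sqrt ε + sqrt ((2 * sqrt ε)^2 - 4*ε))/(n : ℝ) =
      2 * ((n : ℝ) - 1) * sqrt ε / (n : ℝ)) ∧
    ∀ t ∈ Set.Icc (2 * sqrt ε) 1,
      min (t - sqrt (t^2 - 4*ε)) (t - (t + sqrt (t^2 - 4*ε))/(n : ℝ)) ≤
        2 * ((n : ℝ) - 1) * sqrt ε / (n : ℝ) :=
  stmt14_general ε hε n hn
end
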